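/- Let p be a prime, r a positive integer, and G = ℤ_{p^r} of order q = p^r. Let d ∈ G, let H = ⟨d⟩ be the subgroup generated by d, let M be the maximal proper subgroup of H, q̄ = |H|/|M| = p, T_H a transversal of H in G with fixed t_H ∈ T_H, T_M a transversal of M in H, and W̄ the induced channel on the cosets {t_H + t_M + M : t_M ∈ T_M}. Let ε > 0. If Z_d(W) > 1 − ε, then Z_d(W̄) ≥ 1 − q³ε/q̄, where Z_d(W̄) = (1/q̄)·Σ_{t_M∈T_M} Σ_{y∈Y} √( W̄(y | t_H + t_M + M) · W̄(y | t_H + t_M + d + M) ) and t_H + t_M + d + M denotes the coset of M (within t_H + H) containing t_H + t_M + d. -/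

import Mathlib

open Finset

/-- Bhattacharyya distance between two input symbols. -/
noncomputable def Zpair {G Y : Type} [Fintype Y] (W : G → Y → ℝ) (x x' : G) : ℝ :=
  ∑ y : Y, Real.sqrt (W x y * W x' y)

/-- `Z_d(W) = (1/q)·Σ_{x∈G} Z(W_{x,x+d})`. -/
noncomputable def Zd {G Y : Type} [Fintype G] [Fintype Y] [Add G]
    (W : G → Y → ℝ) (d : G) : ℝ :=
  (1 / (Fintype.card G : ℝ)) * ∑ x : G, Zpair W x (x + d)

/-- The induced channel `W̄` on cosets of `M` inside the coset `t_H + H`: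
`W̄(y | t_H + t + M) = (1/|M|)·Σ_{m∈M} W(y | t_H + t + m)`. -/
noncomputable def inducedChannel {G Y : Type} [Fintype G] [AddCommGroup G] [DecidableEq G]
    (W : G → Y → ℝ) (tH : G) (M : AddSubgroup G) [DecidablePred (· ∈ M)] :
    G → Y → ℝ :=
  fun t y => (1 / (Nat.card M : ℝ)) *
    ∑ m ∈ Finset.univ.filter (fun m : G => m ∈ M), W (tH + t + m) y

/-!
Averaging rows can only increase a Bhattacharyya parameter (Cauchy–Schwarz), so
`Z(W̄_{t, t+d})` dominates the average over `m ∈ M` of `Z(W_{t_H+t+m, t_H+t+m+d})`; as `t` runs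
over `T_M`, the points `t + m` sweep `H` exactly once. Since every `Z(W_{x,x+d}) ≤ 1`, the
hypothesis `Z_d(W) > 1 - ε` leaves at most `qε` of defect for the `|H|` points of `t_H + H`,
whence `Z_d(W̄) ≥ 1 - qε/|H| ≥ 1 - q³ε/q̄`.
-/

section Bhattacharyya

variable {G Y : Type} [Fintype Y] {W : G → Y → ℝ}

lemma mul_sum_sqrt_mul_le {ι : Type*} (s : Finset ι) {c : ℝ} (hc : 0 ≤ c) {f g : ι → ℝ}
    (hf : ∀ i, 0 ≤ f i) (hg : ∀ i, 0 ≤ g i) :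
    c * ∑ i ∈ s, √(f i * g i) ≤ √((c * ∑ i ∈ s, f i) * (c * ∑ i ∈ s, g i)) := by
  have hF : 0 ≤ ∑ i ∈ s, f i := sum_nonneg fun i _ => hf i
  calc c * ∑ i ∈ s, √(f i * g i) = c * ∑ i ∈ s, √(f i) * √(g i) := by
        simp only [Real.sqrt_mul (hf _)]
    _ ≤ c * (√(∑ i ∈ s, f i) * √(∑ i ∈ s, g i)) := by
        gcongr; exact Real.sum_sqrt_mul_sqrt_le s hf hg
    _ = √((c * ∑ i ∈ s, f i) * (c * ∑ i ∈ s, g i)) := by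
        rw [mul_mul_mul_comm, ← sq, Real.sqrt_mul (by positivity), Real.sqrt_sq hc,
          Real.sqrt_mul hF]

lemma Zpair_le_one (hW0 : ∀ x y, 0 ≤ W x y) (hW1 : ∀ x, ∑ y, W x y = 1) (x x' : G) :
    Zpair W x x' ≤ 1 := by
  simpa [Zpair, hW1] using mul_sum_sqrt_mul_le univ zero_le_one (hW0 x) (hW0 x')

lemma card_sub_le_sum_Zpair [Fintype G] [Nonempty G] [Add G]
    (hW0 : ∀ x y, 0 ≤ W x y) (hW1 : ∀ x, ∑ y, W x y = 1) (d : G) (S : Finset G) :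
    #S - Fintype.card G * (1 - Zd W d) ≤ ∑ x ∈ S, Zpair W x (x + d) := by
  classical
  have hcompl : ∑ x ∈ Sᶜ, Zpair W x (x + d) ≤ #Sᶜ := by
    simpa using sum_le_sum fun x (_ : x ∈ Sᶜ) => Zpair_le_one hW0 hW1 x (x + d)
  rw [card_compl, Nat.cast_sub (card_le_univ S)] at hcompl
  rw [Zd, mul_sub, mul_one, ← mul_assoc, mul_one_div_cancel (by positivity), one_mul,
    ← sum_add_sum_compl S]
  linarith

lemma Zd_comp_add_left [Fintype G] [AddGroup G] (d a : G) :
    Zd (fun x => W (a + x)) d = Zd W d := by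
  unfold Zd
  congr 1
  exact Fintype.sum_equiv (Equiv.addLeft a) _ _ fun x => by simp [Zpair, add_assoc]

end Bhattacharyya

lemma sum_transversal_sum_subgroup {G β : Type*} [AddCommGroup G] [Fintype G] [AddCommMonoid β]
    {H M : AddSubgroup G} [DecidablePred (· ∈ H)] [DecidablePred (· ∈ M)] (hMH : M ≤ H)
    {T : Finset G} (hTH : (T : Set G) ⊆ H) (hT : ∀ h ∈ H, ∃! t, t ∈ T ∧ h - t ∈ M)
    (f : G → β) :
    ∑ t ∈ T, ∑ m ∈ univ.filter (· ∈ M), f (t + m) = ∑ h ∈ univ.filter (· ∈ H), f h := by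
  rw [← sum_product']
  refine sum_bij (fun x _ => x.1 + x.2) (fun x hx => ?_) (fun x hx y hy hxy => ?_)
    (fun h hh => ?_) fun _ _ => rfl
  · simp only [mem_product, mem_filter, mem_univ, true_and] at hx ⊢
    exact H.add_mem (hTH hx.1) (hMH hx.2)
  · simp only [mem_product, mem_filter, mem_univ, true_and] at hx hy
    obtain ⟨t, -, ht⟩ := hT _ (H.add_mem (hTH hx.1) (hMH hx.2))
    have hx1 : x.1 = t := ht _ ⟨hx.1, by simpa using hx.2⟩
    have hy1 : y.1 = t := ht _ ⟨hy.1, by simpa [hxy] using hy.2⟩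
    have h1 : x.1 = y.1 := hx1.trans hy1.symm
    exact Prod.ext h1 (by simpa [h1] using hxy)
  · simp only [mem_filter, mem_univ, true_and] at hh
    obtain ⟨t, ⟨htT, htM⟩, -⟩ := hT h hh
    exact ⟨(t, h - t), by simp [htT, htM], by simp⟩

section InducedChannel

variable {G Y : Type} [Fintype G] [AddCommGroup G] [DecidableEq G]
  {W : G → Y → ℝ} {tH : G} {M : AddSubgroup G} [DecidablePred (· ∈ M)]

lemma inducedChannel_eq_of_sub_mem {t t' : G} (h : t - t' ∈ M) :
    inducedChannel W tH M t = inducedChannel W tH M t' := by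
  funext y
  refine congrArg _ (sum_equiv (Equiv.addRight (t - t')) (fun m => ?_) fun m _ => ?_)
  · simpa using (M.add_mem_cancel_right h).symm
  · simp only [Equiv.coe_addRight]
    abel_nf

variable [Fintype Y]

lemma average_Zpair_le_Zpair_inducedChannel (hW0 : ∀ x y, 0 ≤ W x y) (t t' : G) :
    (1 / (Nat.card M : ℝ)) * ∑ m ∈ univ.filter (· ∈ M), Zpair W (tH + t + m) (tH + t' + m) ≤
      Zpair (inducedChannel W tH M) t t' := by
  calc (1 / (Nat.card M : ℝ)) * ∑ m ∈ univ.filter (· ∈ M), Zpair W (tH + t + m) (tH + t' + m)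
      = ∑ y, (1 / (Nat.card M : ℝ)) *
          ∑ m ∈ univ.filter (· ∈ M), √(W (tH + t + m) y * W (tH + t' + m) y) := by
        simp only [Zpair]; rw [sum_comm, mul_sum]
    _ ≤ Zpair (inducedChannel W tH M) t t' :=
        sum_le_sum fun y _ => mul_sum_sqrt_mul_le _ (by positivity) (fun _ => hW0 _ y)
          fun _ => hW0 _ y

lemma average_sum_Zpair_le_sum_Zpair_inducedChannel (hW0 : ∀ x y, 0 ≤ W x y)
    {H : AddSubgroup G} [DecidablePred (· ∈ H)] (hMH : M ≤ H) {d : G} (hd : d ∈ H)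
    {T : Finset G} (hTH : (T : Set G) ⊆ H) (hT : ∀ h ∈ H, ∃! t, t ∈ T ∧ h - t ∈ M)
    {ρ : G → G} (hρ : ∀ h ∈ H, h - ρ h ∈ M) :
    (1 / (Nat.card M : ℝ)) * ∑ h ∈ univ.filter (· ∈ H), Zpair W (tH + h) (tH + (h + d)) ≤
      ∑ t ∈ T, Zpair (inducedChannel W tH M) t (ρ (t + d)) :=
  calc (1 / (Nat.card M : ℝ)) * ∑ h ∈ univ.filter (· ∈ H), Zpair W (tH + h) (tH + (h + d))
      = ∑ t ∈ T, (1 / (Nat.card M : ℝ)) *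
          ∑ m ∈ univ.filter (· ∈ M), Zpair W (tH + t + m) (tH + (t + d) + m) := by
        rw [← sum_transversal_sum_subgroup hMH hTH hT, mul_sum]
        simp only [add_assoc, add_comm d]
    _ ≤ ∑ t ∈ T, Zpair (inducedChannel W tH M) t (t + d) :=
        sum_le_sum fun t _ => average_Zpair_le_Zpair_inducedChannel hW0 t (t + d)
    _ = ∑ t ∈ T, Zpair (inducedChannel W tH M) t (ρ (t + d)) := sum_congr rfl fun t ht => by
        rw [Zpair, inducedChannel_eq_of_sub_mem (hρ _ (H.add_mem (hTH ht) hd)), Zpair]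

end InducedChannel

theorem Zd_inducedChannel_ge_Zpr_general
    (p r : ℕ) [NeZero (p ^ r)]
    {Y : Type} [Fintype Y]
    (W : ZMod (p ^ r) → Y → ℝ) (hW0 : ∀ x y, 0 ≤ W x y) (hW1 : ∀ x, ∑ y, W x y = 1)
    (d : ZMod (p ^ r))
    (H : AddSubgroup (ZMod (p ^ r))) (hH : H = AddSubgroup.zmultiples d)
    (M : AddSubgroup (ZMod (p ^ r))) [DecidablePred (· ∈ M)]
    (hMH : M < H)
    (hqbar : Nat.card H = p * Nat.card M)
    (tH : ZMod (p ^ r))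
    (TM : Finset (ZMod (p ^ r))) (hTMsub : (TM : Set (ZMod (p ^ r))) ⊆ (H : Set (ZMod (p ^ r))))
    (hTM : ∀ h ∈ H, ∃! t, t ∈ TM ∧ h - t ∈ M)
    (ρ : ZMod (p ^ r) → ZMod (p ^ r)) (hρ : ∀ h ∈ H, ρ h ∈ TM ∧ h - ρ h ∈ M)
    (ε : ℝ) (hε : 0 < ε)
    (hZ : Zd W d > 1 - ε) :
    (1 / (p : ℝ)) * ∑ t ∈ TM, Zpair (inducedChannel W tH M) t (ρ (t + d)) ≥
      1 - ((p : ℝ) ^ r) ^ 3 * ε / (p : ℝ) := by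
  classical
  have hd : d ∈ H := hH ▸ AddSubgroup.mem_zmultiples d
  have hp : 0 < p := Nat.pos_of_mul_pos_right (hqbar ▸ Nat.card_pos)
  have hM : (1 : ℝ) ≤ Nat.card M := by exact_mod_cast Nat.card_pos
  have hq : (1 : ℝ) ≤ (p : ℝ) ^ r := one_le_pow₀ (by exact_mod_cast hp)
  have hHcard : (#(univ.filter (· ∈ H)) : ℝ) = p * Nat.card M := by
    rw [← Fintype.card_subtype, ← Nat.card_eq_fintype_card, hqbar, Nat.cast_mul]
  have hsum := average_sum_Zpair_le_sum_Zpair_inducedChannel (tH := tH) hW0 hMH.le hd hTMsub hTM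
    fun h hh => (hρ h hh).2
  set S := ∑ h ∈ univ.filter (· ∈ H), Zpair W (tH + h) (tH + (h + d))
  have hcount : p * Nat.card M - (p : ℝ) ^ r * (1 - Zd W d) ≤ S := by
    have := card_sub_le_sum_Zpair (fun _ => hW0 _) (fun _ => hW1 _) d (univ.filter (· ∈ H))
      (W := fun x => W (tH + x))
    rwa [Zd_comp_add_left, ZMod.card, hHcard, Nat.cast_pow] at this
  have hSM : p - (p : ℝ) ^ r * ε ≤ (1 / (Nat.card M : ℝ)) * S := by
    rw [one_div_mul_eq_div, le_div_iff₀ (by positivity)]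
    nlinarith [mul_pos (by positivity : (0 : ℝ) < (p : ℝ) ^ r) hε]
  have hq3 : (p : ℝ) ^ r * ε ≤ ((p : ℝ) ^ r) ^ 3 * ε := by
    gcongr; exact le_self_pow₀ hq (by norm_num)
  calc 1 - ((p : ℝ) ^ r) ^ 3 * ε / p = (1 / (p : ℝ)) * (p - ((p : ℝ) ^ r) ^ 3 * ε) := by
        field_simp
    _ ≤ _ := by gcongr; linarith

/-- for `G = ℤ_{p^r}`, `H = ⟨d⟩`, `M` the maximal proper subgroup of `H`
(of index `q̄ = p` in `H`), `Z_d(W) > 1 − ε` implies `Z_d(W̄) ≥ 1 − q³ε/q̄` for the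
induced channel `W̄`. -/
theorem Zd_inducedChannel_ge_Zpr
    (p r : ℕ) [Fact p.Prime] (hr : 0 < r) [NeZero (p ^ r)]
    {Y : Type} [Fintype Y]
    (W : ZMod (p ^ r) → Y → ℝ) (hW0 : ∀ x y, 0 ≤ W x y) (hW1 : ∀ x, ∑ y, W x y = 1)
    (d : ZMod (p ^ r))
    (H : AddSubgroup (ZMod (p ^ r))) (hH : H = AddSubgroup.zmultiples d)
    (M : AddSubgroup (ZMod (p ^ r))) [DecidablePred (· ∈ M)]
    (hMH : M < H)
    (hMmax : ∀ K : AddSubgroup (ZMod (p ^ r)), M ≤ K → K ≤ H → K = M ∨ K = H)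
    (hqbar : Nat.card H = p * Nat.card M)
    (TH : Finset (ZMod (p ^ r))) (hTH : ∀ g : ZMod (p ^ r), ∃! t, t ∈ TH ∧ g - t ∈ H)
    (tH : ZMod (p ^ r)) (htH : tH ∈ TH)
    (TM : Finset (ZMod (p ^ r))) (hTMsub : (TM : Set (ZMod (p ^ r))) ⊆ (H : Set (ZMod (p ^ r))))
    (hTM : ∀ h ∈ H, ∃! t, t ∈ TM ∧ h - t ∈ M)
    (ρ : ZMod (p ^ r) → ZMod (p ^ r)) (hρ : ∀ h ∈ H, ρ h ∈ TM ∧ h - ρ h ∈ M)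
    (ε : ℝ) (hε : 0 < ε)
    (hZ : Zd W d > 1 - ε) :
    (1 / (p : ℝ)) * ∑ t ∈ TM, Zpair (inducedChannel W tH M) t (ρ (t + d)) ≥
      1 - ((p : ℝ) ^ r) ^ 3 * ε / (p : ℝ) :=
  Zd_inducedChannel_ge_Zpr_general p r W hW0 hW1 d H hH M hMH hqbar tH TM hTMsub hTM ρ hρ ε hε hZ
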